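/- arXiv:0804.0889 — 3 statements merged into one kernel-verified Lean document; each statement's English description precedes it below -/
import Mathlib

section
/- Let M ≥ N ≥ r ≥ 1 be integers, let s ≥ 1 be an integer, let a_1 < a_2 < … < a_s be real numbers with a_1 > −1, and let r_1, …, r_s be positive integers with r_1 + ⋯ + r_s = r. Fix r' ∈ {1, …, r} and let s' ∈ {1, …, s} and t' ∈ {1, …, r_{s'}} be determined by r' = r_1 + ⋯ + r_{s'−1} + t'. Let c > 0 and 0 < R < c be such that |1 − c| < R and |1/(1+a_j) − c| < R for all 1 ≤ j ≤ s'. Then for every integer k with 0 ≤ k ≤ N−r+r'−2, ∫_0^∞ x^{M−N+k} · [ (1/(2πi)) ∮_{|z−c|=R} e^{−M x z} · z^{M−r+r'−1} · (z−1)^{−(N−r)} · (∏_{j=1}^{s'−1} (z − 1/(1+a_j))^{−r_j}) · (z − 1/(1+a_{s'}))^{−t'} dz ] dx = 0. -/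
/-!
The circle lies in the right half-plane, so `x ^ m e^{-Mxz}` decays uniformly in `z` on it and
the two integrals may be exchanged. The Laplace transform `∫₀^∞ x ^ m e^{-Mxz} dx = m! / (Mz)^(m+1)`
then turns the left-hand side into a multiple of `∮ z ^ n / D(z) dz`, where `D` is the
denominator of the integrand and `n = N + r' - k - r - 2`. All zeros of `D` lie inside the circle
and `deg D ≥ n + 2`, so the circle can be blown up to infinity, where `z ^ n / D(z) = o(1/|z|)`:
the contour integral vanishes.
-/

open MeasureTheory Set Filter Metric Topology Polynomial Bornology
open scoped Nat Real

section Laplace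

variable {b : ℂ}

theorem integrableOn_pow_mul_cexp_neg_mul (hb : 0 < b.re) (m : ℕ) :
    IntegrableOn (fun x : ℝ => (x : ℂ) ^ m * Complex.exp (-b * x)) (Ioi 0) := by
  have hreal : IntegrableOn (fun x : ℝ => x ^ (m : ℝ) * Real.exp (-b.re * x ^ (1 : ℝ))) (Ioi 0) :=
    integrableOn_rpow_mul_exp_neg_mul_rpow (by linarith [(m.cast_nonneg : (0 : ℝ) ≤ m)])
      one_pos hb
  refine hreal.mono' (by fun_prop) ?_
  filter_upwards [ae_restrict_mem measurableSet_Ioi] with x (hx : 0 < x)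
  simp [Complex.norm_exp, abs_of_pos hx]

theorem tendsto_pow_mul_cexp_neg_mul_atTop (hb : 0 < b.re) (m : ℕ) :
    Tendsto (fun x : ℝ => (x : ℂ) ^ m * Complex.exp (-b * x)) atTop (𝓝 0) := by
  rw [tendsto_zero_iff_norm_tendsto_zero]
  refine (tendsto_rpow_mul_exp_neg_mul_atTop_nhds_zero m b.re hb).congr' ?_
  filter_upwards [eventually_ge_atTop 0] with x hx
  simp [Complex.norm_exp, abs_of_nonneg hx]

theorem integral_pow_mul_cexp_neg_mul (hb : 0 < b.re) (m : ℕ) :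
    ∫ x in Ioi (0 : ℝ), (x : ℂ) ^ m * Complex.exp (-b * x) = m ! / b ^ (m + 1) := by
  have hb0 : b ≠ 0 := fun h => by simp [h] at hb
  induction m with
  | zero => simpa [div_neg, neg_div] using integral_exp_mul_complex_Ioi (a := -b) (by simpa) 0
  | succ m ih =>
    have hderiv : ∀ x : ℝ, HasDerivAt
        (fun y : ℝ => (y : ℂ) ^ (m + 1) * Complex.exp (-b * y))
        ((m + 1) * ((x : ℂ) ^ m * Complex.exp (-b * x))
          + -b * ((x : ℂ) ^ (m + 1) * Complex.exp (-b * x))) x := by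
      intro x
      refine (((hasDerivAt_pow (m + 1) (x : ℂ)).mul
        ((hasDerivAt_id (x : ℂ)).const_mul (-b)).cexp).comp_ofReal).congr_deriv ?_
      simp only [id, Nat.add_sub_cancel]
      push_cast
      ring
    have hm := (integrableOn_pow_mul_cexp_neg_mul hb m).const_mul ((m : ℂ) + 1)
    have hm1 := (integrableOn_pow_mul_cexp_neg_mul hb (m + 1)).const_mul (-b)
    have hFTC := integral_Ioi_of_hasDerivAt_of_tendsto' (fun x _ => hderiv x) (hm.add hm1)
      (tendsto_pow_mul_cexp_neg_mul_atTop hb (m + 1))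
    rw [integral_add hm hm1, integral_const_mul, integral_const_mul, ih] at hFTC
    rw [Complex.ofReal_zero, zero_pow m.succ_ne_zero, zero_mul, sub_zero] at hFTC
    have hstep : ∫ x in Ioi (0 : ℝ), (x : ℂ) ^ (m + 1) * Complex.exp (-b * x)
        = (m + 1) * (m ! / b ^ (m + 1)) / b :=
      (eq_div_iff hb0).mpr (by linear_combination -hFTC)
    rw [hstep, Nat.factorial_succ]
    field_simp
    push_cast
    ring

end Laplace

theorem integral_Ioi_pow_mul_circleIntegral_cexp {c : ℂ} {R : ℝ} (hR : 0 ≤ R) {g : ℂ → ℂ}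
    (hg : ContinuousOn g (sphere c R)) {b : ℂ} (hb : ∀ z ∈ sphere c R, 0 < (b * z).re)
    (m : ℕ) :
    ∫ x in Ioi (0 : ℝ), (x : ℂ) ^ m * ∮ z in C(c, R), Complex.exp (-(b * x) * z) * g z
      = m ! * ∮ z in C(c, R), g z / (b * z) ^ (m + 1) := by
  set γ := circleMap c R
  have hγ : ∀ θ, γ θ ∈ sphere c R := circleMap_mem_sphere c hR
  obtain ⟨z₀, hz₀, hmin⟩ := (isCompact_sphere c R).exists_isMinOn
    (NormedSpace.sphere_nonempty.mpr hR)
    (Complex.continuous_re.comp (continuous_const_mul b)).continuousOn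
  obtain ⟨G, hG⟩ := (isCompact_sphere c R).exists_bound_of_continuousOn hg
  set δ := (b * z₀).re
  set F : ℝ → ℝ → ℂ := fun x θ =>
    (x : ℂ) ^ m * (deriv γ θ • (Complex.exp (-(b * x) * γ θ) * g (γ θ)))
  have hF_bound : ∀ x ∈ Ioi (0 : ℝ), ∀ θ,
      ‖F x θ‖ ≤ R * G * ‖(x : ℂ) ^ m * Complex.exp (-δ * x)‖ := by
    intro x (hx : 0 < x) θ
    have hexp : ‖Complex.exp (-(b * x) * γ θ)‖ ≤ ‖Complex.exp (-δ * x)‖ := by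
      rw [Complex.norm_exp, Complex.norm_exp, Real.exp_le_exp,
        show -(b * x) * γ θ = -(x * (b * γ θ)) by ring, Complex.neg_re, Complex.re_ofReal_mul,
        ← Complex.ofReal_neg, ← Complex.ofReal_mul, Complex.ofReal_re]
      have hδθ : δ ≤ (b * γ θ).re := hmin (hγ θ)
      nlinarith [mul_le_mul_of_nonneg_left hδθ hx.le]
    simp only [F, norm_mul, norm_smul, γ, deriv_circleMap, norm_circleMap_zero, Complex.norm_I,
      abs_of_nonneg hR, mul_one]
    calc _ ≤ ‖(x : ℂ) ^ m‖ * (R * (‖Complex.exp (-δ * x)‖ * G)) := by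
          gcongr
          exact hG _ (hγ θ)
      _ = _ := by ring
  have hF_cont : Continuous (Function.uncurry F) := by
    have hgγ : Continuous fun p : ℝ × ℝ => g (circleMap c R p.2) :=
      (hg.comp_continuous (continuous_circleMap c R) hγ).comp continuous_snd
    change Continuous fun p : ℝ × ℝ => F p.1 p.2
    simp only [F, γ, deriv_circleMap, smul_eq_mul]
    exact .mul (by fun_prop) (.mul (by fun_prop) (.mul (by fun_prop) hgγ))
  have hF_int : Integrable (Function.uncurry F)
      ((volume.restrict (Ioi 0)).prod (volume.restrict (Ioc 0 (2 * π)))) := by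
    have hδ : 0 < (δ : ℂ).re := hb z₀ hz₀
    have hdom := ((integrableOn_pow_mul_cexp_neg_mul hδ m).norm.const_mul (R * G)).mul_prod
      (integrable_const (1 : ℝ) (μ := volume.restrict (Ioc 0 (2 * π))))
    refine hdom.mono' hF_cont.aestronglyMeasurable ?_
    rw [Measure.prod_restrict]
    filter_upwards [ae_restrict_mem (measurableSet_Ioi.prod measurableSet_Ioc)] with ⟨x, θ⟩ hp
    simpa only [Function.uncurry_apply_pair, mul_one, norm_norm] using hF_bound x hp.1 θ
  have hinner (θ : ℝ) :
      ∫ x in Ioi (0 : ℝ), F x θ = m ! * (deriv γ θ • (g (γ θ) / (b * γ θ) ^ (m + 1))) := by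
    have hbγ := hb _ (hγ θ)
    have hbγ0 : b * γ θ ≠ 0 := fun h => by simp [h] at hbγ
    calc ∫ x in Ioi (0 : ℝ), F x θ = deriv γ θ * g (γ θ) *
          ∫ x in Ioi (0 : ℝ), (x : ℂ) ^ m * Complex.exp (-(b * γ θ) * x) := by
          rw [← integral_const_mul]
          congr 1
          ext x
          simp only [F, smul_eq_mul, show -(b * x) * γ θ = -(b * γ θ) * x by ring]
          ring
      _ = _ := by
          rw [integral_pow_mul_cexp_neg_mul hbγ, smul_eq_mul]
          field_simp
  calc ∫ x in Ioi (0 : ℝ), (x : ℂ) ^ m * ∮ z in C(c, R), Complex.exp (-(b * x) * z) * g z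
      = ∫ x in Ioi (0 : ℝ), ∫ θ in Ioc 0 (2 * π), F x θ := by
        congr 1
        ext x
        rw [circleIntegral, intervalIntegral.integral_of_le Real.two_pi_pos.le,
          ← integral_const_mul]
    _ = ∫ θ in Ioc 0 (2 * π), ∫ x in Ioi (0 : ℝ), F x θ := integral_integral_swap hF_int
    _ = m ! * ∮ z in C(c, R), g z / (b * z) ^ (m + 1) := by
        simp_rw [hinner]
        rw [integral_const_mul, circleIntegral, intervalIntegral.integral_of_le Real.two_pi_pos.le]

theorem circleIntegral_eq_zero_of_tendsto_cobounded {c : ℂ} {R : ℝ} (hR : 0 < R) {f : ℂ → ℂ}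
    (hf : DifferentiableOn ℂ f (ball c R)ᶜ)
    (hlim : Tendsto (fun z => (z - c) * f z) (cobounded ℂ) (𝓝 0)) :
    ∮ z in C(c, R), f z = 0 := by
  have hexpand (ρ : ℝ) (hρ : R ≤ ρ) : ∮ z in C(c, ρ), f z = ∮ z in C(c, R), f z :=
    Complex.circleIntegral_eq_of_differentiable_on_annulus_off_countable hR hρ countable_empty
      (hf.continuousOn.mono fun z hz => hz.2) fun z hz =>
        hf.differentiableAt <| mem_of_superset (isClosed_closedBall.isOpen_compl.mem_nhds hz.1.2)
          (compl_subset_compl.2 ball_subset_closedBall)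
  refine norm_le_zero_iff.mp <| le_of_forall_pos_le_add fun ε hε => ?_
  have hδ : 0 < ε / (2 * π) := by positivity
  obtain ⟨r, -, hr⟩ := (hasBasis_cobounded_compl_closedBall c).eventually_iff.mp <|
    (tendsto_zero_iff_norm_tendsto_zero.mp hlim).eventually (gt_mem_nhds hδ)
  set ρ := max R (r + 1)
  have hρ : 0 < ρ := hR.trans_le (le_max_left _ _)
  have hbound : ∀ z ∈ sphere c ρ, ‖f z‖ ≤ ε / (2 * π) / ρ := by
    intro z hz
    have hzr : z ∈ (closedBall c r)ᶜ := by
      simp only [mem_compl_iff, mem_closedBall, not_le, mem_sphere.mp hz]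
      exact (lt_add_one r).trans_le (le_max_right _ _)
    have := hr hzr
    rw [norm_mul, ← dist_eq_norm, mem_sphere.mp hz] at this
    rw [le_div_iff₀ hρ]
    linarith
  calc ‖∮ z in C(c, R), f z‖ = ‖∮ z in C(c, ρ), f z‖ := by rw [hexpand ρ (le_max_left _ _)]
    _ ≤ 2 * π * ρ * (ε / (2 * π) / ρ) :=
      circleIntegral.norm_integral_le_of_norm_le_const hρ.le hbound
    _ = 0 + ε := by field_simp; ring

theorem circleIntegral_eval_div_eval_eq_zero {c : ℂ} {R : ℝ} (hR : 0 < R) {P Q : ℂ[X]}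
    (hQ : ∀ z ∈ (ball c R)ᶜ, Q.eval z ≠ 0) (hdeg : P.natDegree + 2 ≤ Q.natDegree) :
    ∮ z in C(c, R), P.eval z / Q.eval z = 0 := by
  refine circleIntegral_eq_zero_of_tendsto_cobounded hR
    (P.differentiable.differentiableOn.div Q.differentiable.differentiableOn hQ) ?_
  have hlt : ((X - C c) * P).degree < Q.degree := by
    refine degree_lt_degree ((natDegree_mul_le).trans_lt ?_)
    rw [natDegree_X_sub_C]
    omega
  simpa [mul_div_assoc] using (isLittleO_cobounded_of_degree_lt hlt).tendsto_div_nhds_zero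

theorem integral_Ioi_pow_mul_circleIntegral_cexp_pow_div_eval_eq_zero {c : ℂ} {R : ℝ}
    (hR : 0 < R) {Q : ℂ[X]} (hQ : ∀ z ∈ (ball c R)ᶜ, Q.eval z ≠ 0) {b : ℂ}
    (hb : ∀ z ∈ sphere c R, 0 < (b * z).re) {m n : ℕ} (hn : n + 2 ≤ Q.natDegree) :
    ∫ x in Ioi (0 : ℝ), (x : ℂ) ^ m *
      ∮ z in C(c, R), Complex.exp (-(b * x) * z) * (z ^ (n + m + 1) / Q.eval z) = 0 := by
  have hcont : ContinuousOn (fun z => z ^ (n + m + 1) / Q.eval z) (sphere c R) :=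
    (continuous_pow _).continuousOn.div Q.continuous.continuousOn
      fun z hz => hQ z (sphere_disjoint_ball.subset_compl_right hz)
  have hcancel : EqOn (fun z => z ^ (n + m + 1) / Q.eval z / (b * z) ^ (m + 1))
      (fun z => (b ^ (m + 1))⁻¹ * ((X ^ n : ℂ[X]).eval z / Q.eval z)) (sphere c R) := by
    intro z hz
    obtain ⟨hb0, hz0⟩ := mul_ne_zero_iff.mp fun h => (hb z hz).ne' (by rw [h, Complex.zero_re])
    simp only [eval_pow, eval_X, add_assoc, pow_add z n, mul_pow]
    field_simp
  rw [integral_Ioi_pow_mul_circleIntegral_cexp hR.le hcont hb, circleIntegral.integral_congr hR.le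
    hcancel, circleIntegral.integral_const_mul,
    circleIntegral_eval_div_eval_eq_zero hR hQ (by rwa [natDegree_X_pow]), mul_zero, mul_zero]

noncomputable def laguerreDenominator {s : ℕ} (a : Fin s → ℝ) (rm : Fin s → ℕ) (n₀ : ℕ)
    (s' : Fin s) (t' : ℕ) : ℂ[X] :=
  (X - C 1) ^ n₀ * (∏ j ∈ Finset.Iio s', (X - C (1 / (1 + (a j : ℂ)))) ^ rm j) *
    (X - C (1 / (1 + (a s' : ℂ)))) ^ t'

section LaguerreDenominator

variable {s : ℕ} (a : Fin s → ℝ) (rm : Fin s → ℕ) (n₀ : ℕ) (s' : Fin s) (t' : ℕ)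

theorem eval_laguerreDenominator (z : ℂ) :
    (laguerreDenominator a rm n₀ s' t').eval z = (z - 1) ^ n₀ *
      (∏ j ∈ Finset.Iio s', (z - 1 / (1 + (a j : ℂ))) ^ rm j) *
        (z - 1 / (1 + (a s' : ℂ))) ^ t' := by
  simp [laguerreDenominator, eval_prod]

theorem natDegree_laguerreDenominator :
    (laguerreDenominator a rm n₀ s' t').natDegree = n₀ + ((∑ j ∈ Finset.Iio s', rm j) + t') := by
  have hmonic (p : ℂ) (e : ℕ) : ((X - C p) ^ e).Monic := (monic_X_sub_C p).pow e
  rw [laguerreDenominator,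
    ((hmonic _ _).mul (monic_prod_of_monic _ _ fun j _ => hmonic _ _)).natDegree_mul (hmonic _ _),
    (hmonic _ _).natDegree_mul (monic_prod_of_monic _ _ fun j _ => hmonic _ _),
    natDegree_prod_of_monic _ _ fun j _ => hmonic _ _]
  simp only [natDegree_pow, natDegree_X_sub_C, mul_one, add_assoc]

variable {a rm n₀ s' t'}

theorem eval_laguerreDenominator_ne_zero {c R : ℝ} (h1 : |1 - c| < R)
    (ha : ∀ j ≤ s', |1 / (1 + a j) - c| < R) {z : ℂ} (hz : z ∉ ball (c : ℂ) R) :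
    (laguerreDenominator a rm n₀ s' t').eval z ≠ 0 := by
  have hpole (x : ℝ) (hx : |x - c| < R) : z - x ≠ 0 := fun h => hz <| by
    rwa [sub_eq_zero.mp h, mem_ball, dist_eq_norm, ← Complex.ofReal_sub, Complex.norm_real,
      Real.norm_eq_abs]
  rw [eval_laguerreDenominator]
  refine mul_ne_zero (mul_ne_zero (pow_ne_zero _ ?_)
    (Finset.prod_ne_zero_iff.mpr fun j hj => pow_ne_zero _ ?_)) (pow_ne_zero _ ?_)
  · exact_mod_cast hpole 1 h1
  · exact_mod_cast hpole _ (ha j (Finset.mem_Iio.mp hj).le)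
  · exact_mod_cast hpole _ (ha s' le_rfl)

end LaguerreDenominator

theorem re_pos_of_mem_closedBall {c R : ℝ} (hRc : R < c) {z : ℂ}
    (hz : z ∈ closedBall (c : ℂ) R) : 0 < z.re := by
  have hre := (Complex.abs_re_le_norm (z - c)).trans (mem_closedBall_iff_norm.mp hz)
  rw [Complex.sub_re, Complex.ofReal_re] at hre
  linarith [(abs_le.mp hre).1]

theorem stmt_7_general (M N r s : ℕ) (hr : 1 ≤ r) (hrN : r ≤ N) (hNM : N ≤ M)
    (a : Fin s → ℝ)
    (rm : Fin s → ℕ)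
    (r' : ℕ)
    (s' : Fin s) (t' : ℕ)
    (hdecomp : r' = (∑ j ∈ Finset.Iio s', rm j) + t')
    (c : ℝ) (R : ℝ) (hR0 : 0 < R) (hRc : R < c)
    (h1 : |1 - c| < R) (hja : ∀ j : Fin s, j ≤ s' → |1 / (1 + a j) - c| < R)
    (k : ℕ) (hk : k + r + 2 ≤ N + r') :
    ∫ x in Set.Ioi (0 : ℝ), (x : ℂ) ^ (M - N + k) *
      ((2 * (Real.pi : ℂ) * Complex.I)⁻¹ *
        ∮ z in C((c : ℂ), R),
          Complex.exp (-((M : ℂ) * (x : ℂ)) * z) * z ^ (M - r + r' - 1) /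
            ((z - 1) ^ (N - r) *
              (∏ j ∈ Finset.Iio s', (z - 1 / (1 + (a j : ℂ))) ^ rm j) *
              (z - 1 / (1 + (a s' : ℂ))) ^ t')) = 0 := by
  have hM : (0 : ℝ) < M := by norm_cast; omega
  have hre : ∀ z ∈ sphere (c : ℂ) R, 0 < ((M : ℂ) * z).re := fun z hz => by
    rw [← Complex.ofReal_natCast, Complex.re_ofReal_mul]
    exact mul_pos hM (re_pos_of_mem_closedBall hRc (sphere_subset_closedBall hz))
  have hdeg : N + r' - (k + r + 2) + 2 ≤ (laguerreDenominator a rm (N - r) s' t').natDegree := by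
    rw [natDegree_laguerreDenominator]
    omega
  have hvanish := integral_Ioi_pow_mul_circleIntegral_cexp_pow_div_eval_eq_zero (m := M - N + k)
    hR0 (fun z hz => eval_laguerreDenominator_ne_zero h1 hja hz) hre hdeg
  rw [show N + r' - (k + r + 2) + (M - N + k) + 1 = M - r + r' - 1 by omega] at hvanish
  simp only [eval_laguerreDenominator] at hvanish
  rw [← mul_zero (2 * (Real.pi : ℂ) * Complex.I)⁻¹, ← hvanish, ← integral_const_mul]
  congr 1 with x
  simp only [mul_div_assoc]
  ring

/-- Orthogonality of the multiple Laguerre functions of type I (given by a contour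
integral over a circle enclosing `1` and the `1/(1+aⱼ)` but not the origin) to low-degree
monomials, with respect to the weight `x^(M-N) e^(-Mx)` on `(0, ∞)` (here absorbed into
the integrand). -/
theorem stmt_7 (M N r s : ℕ) (hr : 1 ≤ r) (hrN : r ≤ N) (hNM : N ≤ M) (hs : 1 ≤ s)
    (a : Fin s → ℝ) (ha : StrictMono a) (ha1 : -1 < a ⟨0, hs⟩)
    (rm : Fin s → ℕ) (hrm : ∀ j, 1 ≤ rm j) (hsum : ∑ j, rm j = r)
    (r' : ℕ) (hr'1 : 1 ≤ r') (hr'r : r' ≤ r)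
    (s' : Fin s) (t' : ℕ) (ht'1 : 1 ≤ t') (ht' : t' ≤ rm s')
    (hdecomp : r' = (∑ j ∈ Finset.Iio s', rm j) + t')
    (c : ℝ) (hc : 0 < c) (R : ℝ) (hR0 : 0 < R) (hRc : R < c)
    (h1 : |1 - c| < R) (hja : ∀ j : Fin s, j ≤ s' → |1 / (1 + a j) - c| < R)
    (k : ℕ) (hk : k + r + 2 ≤ N + r') :
    ∫ x in Set.Ioi (0 : ℝ), (x : ℂ) ^ (M - N + k) *
      ((2 * (Real.pi : ℂ) * Complex.I)⁻¹ *
        ∮ z in C((c : ℂ), R),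
          Complex.exp (-((M : ℂ) * (x : ℂ)) * z) * z ^ (M - r + r' - 1) /
            ((z - 1) ^ (N - r) *
              (∏ j ∈ Finset.Iio s', (z - 1 / (1 + (a j : ℂ))) ^ rm j) *
              (z - 1 / (1 + (a s' : ℂ))) ^ t')) = 0 :=
  stmt_7_general M N r s hr hrN hNM a rm r' s' t' hdecomp c R hR0 hRc h1 hja k hk
end

section
/- Let M ≥ N ≥ 1 be integers and 0 ≤ j ≤ N−1 an integer. Then for every x > 0, (d/dx) [ ( Σ_{k=0}^{j} ( ∏_{i=1}^{k} (2i−1)/(2i+2(M−N)) ) · L_{2k}^{(2(M−N))}(2Mx) ) · x^{M−N+1/2} e^{−Mx} ] = (1/2) · ( ∏_{k=1}^{j} (2k−1)/(2k+2(M−N)) ) · (2j+1) · L_{2j+1}^{(2(M−N))}(2Mx) · x^{M−N−1/2} e^{−Mx}. -/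
/-!
Put `t = 2Mx` and `α = 2(M - N)`. The product rule writes the derivative as
`x^{M-N-1/2} e^{-Mx} / 2` times `(2 t ∂_t + α + 1 - t)` applied to the sum. This operator sends
`L_0` to `L_1` and, for `n ≥ 1`, `L_n` to `(n + 1) L_{n+1} - (n + α) L_{n-1}` (all with parameter
`α`), by the three-term recurrence together with
`t L_n^{(α+1)} = (n + α + 1) L_n^{(α)} - (n + 1) L_{n+1}^{(α)}`.
The coefficients satisfy `c_k (2k + α) = c_{k-1} (2k - 1)`, so the sum telescopes to its top term.
-/

open MeasureTheory

/-- The generalized Laguerre polynomial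
`L_n^(α)(x) = ∑_{k=0}^{n} (-1)^k (n+α choose n-k) x^k / k!`. -/
noncomputable def genLaguerre (n α : ℕ) (x : ℝ) : ℝ :=
  ∑ k ∈ Finset.range (n + 1),
    (-1 : ℝ) ^ k * ((n + α).choose (n - k) : ℝ) * x ^ k / (k.factorial : ℝ)

/-- The skew inner product
`⟨f, g⟩₄ = ∫_0^∞ (f(x) g'(x) - f'(x) g(x)) x^(2(M-N)+1) e^(-2Mx) dx`. -/
noncomputable def skewInner (M N : ℕ) (f g : ℝ → ℝ) : ℝ :=
  ∫ x in Set.Ioi (0 : ℝ),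
    (f x * deriv g x - deriv f x * g x) * x ^ (2 * (M - N) + 1) *
      Real.exp (-(2 * (M : ℝ)) * x)

open Finset
open scoped Nat

lemma genLaguerre_zero_left (α : ℕ) (t : ℝ) : genLaguerre 0 α t = 1 := by
  simp [genLaguerre]

lemma genLaguerre_one_left (α : ℕ) (t : ℝ) : genLaguerre 1 α t = α + 1 - t := by
  simp [genLaguerre, sum_range_succ, sub_eq_add_neg, add_comm]

/-- Writing the binomial coefficient as `(n + α).choose (k + α)` makes the terms with `k > n`
vanish, so the sum may be taken over any longer range. -/
lemma genLaguerre_eq_sum_range {n K : ℕ} (hK : n < K) (α : ℕ) (t : ℝ) :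
    genLaguerre n α t =
      ∑ k ∈ range K, (-1) ^ k * ((n + α).choose (k + α) : ℝ) * t ^ k / k ! := by
  rw [genLaguerre, ← sum_subset (range_subset_range.2 hK)]
  · refine sum_congr rfl fun k hk => ?_
    rw [Nat.choose_symm_of_eq_add (by rw [mem_range] at hk; omega : n + α = (n - k) + (k + α))]
  · intro k _ hk
    rw [mem_range, not_lt] at hk
    rw [Nat.choose_eq_zero_of_lt (by omega)]
    simp

lemma mul_sum_range_pow_div_factorial (g : ℕ → ℝ) (K : ℕ) (t : ℝ) :
    t * ∑ k ∈ range K, g k * t ^ k / k ! =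
      ∑ k ∈ range (K + 1), k * g (k - 1) * t ^ k / k ! := by
  rw [sum_range_succ', mul_sum]
  simp only [CharP.cast_eq_zero, zero_mul, zero_div, add_zero]
  refine sum_congr rfl fun k _ => ?_
  rw [Nat.factorial_succ]
  push_cast
  field_simp
  ring

lemma cast_choose_succ_mul (p q : ℕ) :
    ((p + 1).choose q : ℝ) * (p + 1 - q) = p.choose q * (p + 1) := by
  rcases le_or_gt q (p + 1) with hq | hq
  · have := congrArg (Nat.cast (R := ℝ)) (Nat.choose_mul_succ_eq p q)
    push_cast [Nat.cast_sub hq] at this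
    linarith
  · simp [Nat.choose_eq_zero_of_lt hq, Nat.choose_eq_zero_of_lt (by omega : p < q)]

lemma genLaguerre_pascal (n α : ℕ) (t : ℝ) :
    genLaguerre (n + 1) (α + 1) t = genLaguerre (n + 1) α t + genLaguerre n (α + 1) t := by
  simp only [genLaguerre_eq_sum_range (K := n + 2) (by omega : n + 1 < n + 2),
    genLaguerre_eq_sum_range (K := n + 2) (by omega : n < n + 2), ← sum_add_distrib]
  refine sum_congr rfl fun k _ => ?_
  rw [show n + 1 + (α + 1) = n + 1 + α + 1 by ring, show k + (α + 1) = k + α + 1 by ring,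
    Nat.choose_succ_succ', show n + (α + 1) = n + 1 + α by ring]
  push_cast
  ring

lemma mul_genLaguerre_alpha_succ (n α : ℕ) (t : ℝ) :
    t * genLaguerre n (α + 1) t =
      (n + α + 1) * genLaguerre n α t - (n + 1) * genLaguerre (n + 1) α t := by
  rw [genLaguerre_eq_sum_range (Nat.lt_succ_self n), mul_sum_range_pow_div_factorial,
    genLaguerre_eq_sum_range (K := n + 2) (by omega : n < n + 2),
    genLaguerre_eq_sum_range (K := n + 2) (by omega : n + 1 < n + 2), mul_sum, mul_sum,
    ← sum_sub_distrib]
  refine sum_congr rfl fun k _ => ?_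
  rcases k with _ | k
  · have := cast_choose_succ_mul (n + α) α
    rw [zero_add, show n + 1 + α = n + α + 1 by ring]
    push_cast at this ⊢
    linear_combination this
  · have := cast_choose_succ_mul (n + α) (k + 1 + α)
    rw [show n + (α + 1) = n + α + 1 by ring, show k + 1 - 1 + (α + 1) = k + 1 + α by omega,
      show n + 1 + α = n + α + 1 by ring]
    push_cast at this ⊢
    linear_combination -((-1) ^ k * t ^ (k + 1) / (k + 1)!) * this

lemma genLaguerre_three_term (n α : ℕ) (t : ℝ) :
    (n + 2) * genLaguerre (n + 2) α t =
      (2 * n + α + 3 - t) * genLaguerre (n + 1) α t - (n + α + 1) * genLaguerre n α t := by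
  have h₀ := mul_genLaguerre_alpha_succ n α t
  have h₁ := mul_genLaguerre_alpha_succ (n + 1) α t
  have hp := genLaguerre_pascal n α t
  rw [show n + 1 + 1 = n + 2 by rfl] at h₁
  push_cast at h₁
  linear_combination h₁ - t * hp - h₀

lemma hasDerivAt_genLaguerre_succ (n α : ℕ) (t : ℝ) :
    HasDerivAt (genLaguerre (n + 1) α) (-genLaguerre n (α + 1) t) t := by
  have hL : genLaguerre (n + 1) α = fun s =>
      ∑ k ∈ range (n + 2), (-1) ^ k * ((n + 1 + α).choose (k + α) : ℝ) * s ^ k / k ! :=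
    funext (genLaguerre_eq_sum_range (by omega) α)
  rw [hL]
  refine (HasDerivAt.fun_sum fun k _ => ((hasDerivAt_pow k t).const_mul
    ((-1) ^ k * ((n + 1 + α).choose (k + α) : ℝ))).div_const (k ! : ℝ)).congr_deriv ?_
  rw [sum_range_succ', genLaguerre_eq_sum_range (Nat.lt_succ_self n), ← sum_neg_distrib]
  simp only [CharP.cast_eq_zero, zero_mul, mul_zero, zero_div, add_zero]
  refine sum_congr rfl fun k _ => ?_
  rw [show n + (α + 1) = n + 1 + α by ring, show k + (α + 1) = k + 1 + α by ring,
    Nat.factorial_succ, Nat.add_sub_cancel]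
  push_cast
  field_simp
  ring

@[fun_prop]
lemma differentiable_genLaguerre (n α : ℕ) : Differentiable ℝ (genLaguerre n α) := by
  unfold genLaguerre
  fun_prop

lemma deriv_genLaguerre_zero (α : ℕ) (t : ℝ) : deriv (genLaguerre 0 α) t = 0 := by
  simp [funext (genLaguerre_zero_left α)]

lemma two_mul_deriv_genLaguerre_succ_add (n α : ℕ) (t : ℝ) :
    2 * t * deriv (genLaguerre (n + 1) α) t + (α + 1 - t) * genLaguerre (n + 1) α t =
      (n + 2) * genLaguerre (n + 2) α t - (n + α + 1) * genLaguerre n α t := by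
  rw [(hasDerivAt_genLaguerre_succ n α t).deriv]
  linear_combination -2 * mul_genLaguerre_alpha_succ n α t - genLaguerre_three_term n α t

noncomputable def laguerreCoeff (α k : ℕ) : ℝ :=
  ∏ i ∈ Icc 1 k, (2 * (i : ℝ) - 1) / (2 * i + α)

lemma laguerreCoeff_succ_mul (α k : ℕ) :
    laguerreCoeff α (k + 1) * (2 * k + α + 2) = laguerreCoeff α k * (2 * k + 1) := by
  rw [laguerreCoeff, prod_Icc_succ_top (by omega), ← laguerreCoeff]
  push_cast
  field_simp
  ring

lemma sum_laguerreCoeff_mul_two_mul_deriv_add (α j : ℕ) (t : ℝ) :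
    ∑ k ∈ range (j + 1), laguerreCoeff α k *
        (2 * t * deriv (genLaguerre (2 * k) α) t + (α + 1 - t) * genLaguerre (2 * k) α t) =
      laguerreCoeff α j * (2 * j + 1) * genLaguerre (2 * j + 1) α t := by
  induction j with
  | zero =>
    simp [laguerreCoeff, deriv_genLaguerre_zero, genLaguerre_zero_left, genLaguerre_one_left]
  | succ j ih =>
    rw [sum_range_succ, ih, show 2 * (j + 1) = 2 * j + 1 + 1 by ring,
      two_mul_deriv_genLaguerre_succ_add, show 2 * j + 1 + 2 = 2 * (j + 1) + 1 by ring]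
    push_cast
    linear_combination -genLaguerre (2 * j + 1) α t * laguerreCoeff_succ_mul α j

lemma hasDerivAt_comp_mul_mul_rpow_mul_exp {f : ℝ → ℝ} {f' : ℝ} (a b s : ℝ) {x : ℝ}
    (hx : 0 < x) (hf : HasDerivAt f f' (b * x)) :
    HasDerivAt (fun y => f (b * y) * y ^ s * Real.exp (-a * y))
      (x ^ (s - 1) * Real.exp (-a * x) * (b * x * f' + (s - a * x) * f (b * x))) x := by
  have hfb : HasDerivAt (fun y => f (b * y)) (f' * b) x :=
    hf.comp x (by simpa using (hasDerivAt_id x).const_mul b)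
  have hexp : HasDerivAt (fun y => Real.exp (-a * y)) (Real.exp (-a * x) * -a) x :=
    (by simpa using (hasDerivAt_id x).const_mul (-a) : HasDerivAt (fun y => -a * y) (-a) x).exp
  have hpow : HasDerivAt (fun y => y ^ s) (s * x ^ (s - 1)) x :=
    Real.hasDerivAt_rpow_const (Or.inl hx.ne')
  refine ((hfb.fun_mul hpow).fun_mul hexp).congr_deriv ?_
  rw [Real.rpow_sub_one hx.ne']
  field_simp
  ring

noncomputable def evenLaguerreSum (α j : ℕ) (t : ℝ) : ℝ :=
  ∑ k ∈ range (j + 1), laguerreCoeff α k * genLaguerre (2 * k) α t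

lemma differentiable_evenLaguerreSum (α j : ℕ) : Differentiable ℝ (evenLaguerreSum α j) := by
  unfold evenLaguerreSum
  fun_prop

lemma two_mul_deriv_evenLaguerreSum_add (α j : ℕ) (t : ℝ) :
    2 * t * deriv (evenLaguerreSum α j) t + (α + 1 - t) * evenLaguerreSum α j t =
      laguerreCoeff α j * (2 * j + 1) * genLaguerre (2 * j + 1) α t := by
  rw [← sum_laguerreCoeff_mul_two_mul_deriv_add]
  unfold evenLaguerreSum
  rw [deriv_fun_sum fun k _ => by fun_prop, mul_sum, mul_sum, ← sum_add_distrib]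
  simp only [deriv_const_mul_field']
  refine sum_congr rfl fun k _ => ?_
  ring

theorem stmt_13_general (M N : ℕ) (hMN : N ≤ M) (j : ℕ)
    (x : ℝ) (hx : 0 < x) :
    HasDerivAt
      (fun y : ℝ =>
        (∑ k ∈ Finset.range (j + 1),
            (∏ i ∈ Finset.Icc 1 k,
                (2 * (i : ℝ) - 1) / (2 * (i : ℝ) + 2 * ((M : ℝ) - (N : ℝ)))) *
              genLaguerre (2 * k) (2 * (M - N)) (2 * (M : ℝ) * y)) *
          y ^ ((M : ℝ) - (N : ℝ) + 1 / 2) * Real.exp (-(M : ℝ) * y))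
      ((1 / 2) *
          (∏ k ∈ Finset.Icc 1 j,
              (2 * (k : ℝ) - 1) / (2 * (k : ℝ) + 2 * ((M : ℝ) - (N : ℝ)))) *
          (2 * (j : ℝ) + 1) * genLaguerre (2 * j + 1) (2 * (M - N)) (2 * (M : ℝ) * x) *
          x ^ ((M : ℝ) - (N : ℝ) - 1 / 2) * Real.exp (-(M : ℝ) * x)) x := by
  have hα : ((2 * (M - N) : ℕ) : ℝ) = 2 * ((M : ℝ) - N) := by
    push_cast [Nat.cast_sub hMN]
    ring
  rw [← hα]
  refine (hasDerivAt_comp_mul_mul_rpow_mul_exp M (2 * M) (M - N + 1 / 2) hx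
    (differentiable_evenLaguerreSum (2 * (M - N)) j _).hasDerivAt).congr_deriv ?_
  have htelescope := two_mul_deriv_evenLaguerreSum_add (2 * (M - N)) j (2 * M * x)
  rw [laguerreCoeff] at htelescope
  rw [show (M : ℝ) - N + 1 / 2 - 1 = M - N - 1 / 2 by ring]
  linear_combination (x ^ ((M : ℝ) - N - 1 / 2) * Real.exp (-M * x) / 2) *
    (htelescope - evenLaguerreSum (2 * (M - N)) j (2 * M * x) * hα)

/-- The derivative of the even skew-orthogonal combination `ψ_{2j}` telescopes:
`(d/dx)[ (∑_{k=0}^j (∏_{i=1}^k (2i-1)/(2i+2(M-N))) L_{2k}^{(2(M-N))}(2Mx))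
             · x^{M-N+1/2} e^{-Mx} ]
  = (1/2) (∏_{k=1}^j (2k-1)/(2k+2(M-N))) (2j+1) L_{2j+1}^{(2(M-N))}(2Mx)
             · x^{M-N-1/2} e^{-Mx}` for `x > 0`. -/
theorem stmt_13 (M N : ℕ) (hN : 1 ≤ N) (hMN : N ≤ M) (j : ℕ) (hj : j ≤ N - 1)
    (x : ℝ) (hx : 0 < x) :
    HasDerivAt
      (fun y : ℝ =>
        (∑ k ∈ Finset.range (j + 1),
            (∏ i ∈ Finset.Icc 1 k,
                (2 * (i : ℝ) - 1) / (2 * (i : ℝ) + 2 * ((M : ℝ) - (N : ℝ)))) *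
              genLaguerre (2 * k) (2 * (M - N)) (2 * (M : ℝ) * y)) *
          y ^ ((M : ℝ) - (N : ℝ) + 1 / 2) * Real.exp (-(M : ℝ) * y))
      ((1 / 2) *
          (∏ k ∈ Finset.Icc 1 j,
              (2 * (k : ℝ) - 1) / (2 * (k : ℝ) + 2 * ((M : ℝ) - (N : ℝ)))) *
          (2 * (j : ℝ) + 1) * genLaguerre (2 * j + 1) (2 * (M - N)) (2 * (M : ℝ) * x) *
          x ^ ((M : ℝ) - (N : ℝ) - 1 / 2) * Real.exp (-(M : ℝ) * x)) x :=
  stmt_13_general M N hMN j x hx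
end

section
/- Let M ≥ N ≥ 1 be integers and a > −1 a real number. Define φ_{2N−2}(x) = Σ_{k=0}^{N−1} ( ∏_{i=1}^{k} (2i−1)/(2i+2(M−N)) ) · L_{2k}^{(2(M−N))}(2Mx) and φ_{2N−1}(x) = exp((a/(1+a))·2Mx) − (1+a)^{2(M−N)+1} · Σ_{j=0}^{2N−2} (−a)^j · L_j^{(2(M−N))}(2Mx). Then ⟨φ_{2N−2}, φ_{2N−1}⟩_4 = ((1+a)/(2M))^{2(M−N)+1} · a^{2N−1} · ((2M−1)!/(2N−2)!) · ∏_{k=1}^{N−1} (2k−1)/(2k+2(M−N)). -/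
/-!
Substituting `y = 2Mx` turns `φ_{2N-2}` into `F(y)` and `φ_{2N-1}` into `e^{cy} - Q(y)`, with
`F = ∑ γ_k L_{2k}^{(A)}` (`γ_k` the products in `φ_{2N-2}`),
`Q = (1+a)^{A+1} ∑_{j ≤ 2N-2} (-a)^j L_j^{(A)}`, `A = 2(M-N)` and `c = a/(1+a)`. The skew product
then splits into `∫ (cF - F') y^{A+1} e^{-y/(1+a)}` minus the polynomial skew product
`∫ (FQ' - F'Q) y^{A+1} e^{-y}`, and every such integral is a finite sum of Gamma integrals.
From `L_n^{(A)} = L_n^{(A+1)} - L_{n-1}^{(A+1)}`, `(L_n^{(A)})' = -L_{n-1}^{(A+1)}` and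
orthogonality, the skew Gram matrix of the `L_n^{(A)}` is supported on `|m - n| = 1`, with entries
`±h_n`, `h_n = (n+A+1)!/n!`. The weights satisfy `γ_{k+1} h_{2k+1} = γ_k h_{2k}`: this cancels the
polynomial part entirely and makes the exponential part telescope to
`(1+a)^{A+1} a^{2N-1} γ_{N-1} h_{2N-2}`.
-/

open MeasureTheory Finset Polynomial
open scoped Nat

noncomputable def laguerre (n β : ℕ) : ℝ[X] :=
  ∑ k ∈ range (n + 1), monomial k ((-1) ^ k * ((n + β).choose (n - k) : ℝ) / k !)

lemma eval_laguerre (n β : ℕ) (x : ℝ) : (laguerre n β).eval x = genLaguerre n β x := by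
  simp only [laguerre, genLaguerre, eval_finsetSum, eval_monomial]
  exact sum_congr rfl fun k _ => by ring

@[simp]
lemma laguerre_zero (β : ℕ) : laguerre 0 β = 1 := by
  simp [laguerre]

lemma derivative_laguerre_succ (n β : ℕ) :
    derivative (laguerre (n + 1) β) = -laguerre n (β + 1) := by
  rw [laguerre, laguerre, derivative_sum, sum_range_succ', ← sum_neg_distrib]
  simp only [derivative_monomial, Nat.add_sub_cancel, pow_zero, Nat.cast_zero, mul_zero,
    monomial_zero_right, add_zero]
  refine sum_congr rfl fun k _ => ?_
  rw [← monomial_neg, Nat.add_sub_add_right, Nat.factorial_succ, add_right_comm n 1 β,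
    add_assoc n β 1]
  congr 1
  push_cast
  field_simp
  ring

lemma laguerre_succ_eq_sub (n β : ℕ) :
    laguerre (n + 1) β = laguerre (n + 1) (β + 1) - laguerre n (β + 1) := by
  rw [eq_sub_iff_add_eq, eq_comm, laguerre, laguerre, laguerre, sum_range_succ _ (n + 1),
    sum_range_succ _ (n + 1), add_right_comm (∑ k ∈ range (n + 1), _), ← sum_add_distrib]
  congr 1
  · refine sum_congr rfl fun k hk => ?_
    rw [mem_range] at hk
    rw [← map_add, Nat.sub_add_comm (by omega : k ≤ n),
      show n + 1 + (β + 1) = n + 1 + β + 1 by ring, Nat.choose_succ_succ',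
      show n + 1 + β = n + (β + 1) by ring]
    congr 1
    push_cast
    ring
  · simp

/-- `p ↦ ∫_0^∞ p(x) x^w e^{-bx} dx`, defined coefficientwise from
`∫_0^∞ x^n e^{-bx} dx = n!/b^{n+1}` so that it is linear with no integrability side conditions. -/
noncomputable def gammaMoment (w : ℕ) (b : ℝ) : ℝ[X] →ₗ[ℝ] ℝ :=
  lsum fun k => ((k + w)! / b ^ (k + w + 1) : ℝ) • LinearMap.id

lemma gammaMoment_monomial (w k : ℕ) (b r : ℝ) :
    gammaMoment w b (monomial k r) = r * ((k + w)! / b ^ (k + w + 1)) := by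
  simp [gammaMoment, sum_monomial_index, mul_comm]

lemma gammaMoment_one (w : ℕ) (b : ℝ) : gammaMoment w b 1 = w ! / b ^ (w + 1) := by
  simpa using gammaMoment_monomial w 0 b 1

lemma gammaMoment_monomial_mul (w k : ℕ) (b r : ℝ) (p : ℝ[X]) :
    gammaMoment w b (monomial k r * p) = r * gammaMoment (w + k) b p := by
  induction p using Polynomial.induction_on' with
  | add p q hp hq => rw [mul_add, map_add, map_add, hp, hq, mul_add]
  | monomial n s =>
    rw [monomial_mul_monomial, gammaMoment_monomial, gammaMoment_monomial,
      show k + n + w = n + (w + k) by ring]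
    ring

lemma integral_pow_mul_exp_neg_mul {b : ℝ} (hb : 0 < b) (n : ℕ) :
    ∫ x in Set.Ioi (0 : ℝ), x ^ n * Real.exp (-b * x) = n ! / b ^ (n + 1) := by
  have h := Real.integral_rpow_mul_exp_neg_mul_Ioi (a := n + 1) (by positivity) hb
  simp only [add_sub_cancel_right, Real.rpow_natCast, ← neg_mul] at h
  rw [h, Real.Gamma_nat_eq_factorial, ← Nat.cast_succ, Real.rpow_natCast, one_div, inv_pow,
    div_eq_inv_mul]

lemma integrableOn_pow_mul_exp_neg_mul {b : ℝ} (hb : 0 < b) (n : ℕ) :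
    IntegrableOn (fun x : ℝ => x ^ n * Real.exp (-b * x)) (Set.Ioi 0) := by
  simpa using integrableOn_rpow_mul_exp_neg_mul_rpow (s := n)
    (neg_one_lt_zero.trans_le n.cast_nonneg) one_pos hb

lemma integrableOn_eval_mul_pow_mul_exp_neg_mul {b : ℝ} (hb : 0 < b) (w : ℕ) (p : ℝ[X]) :
    IntegrableOn (fun x => p.eval x * x ^ w * Real.exp (-b * x)) (Set.Ioi 0) := by
  induction p using Polynomial.induction_on' with
  | add p q hp hq =>
    simp only [eval_add, add_mul]
    exact hp.add hq
  | monomial n r =>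
    simp only [eval_monomial, mul_assoc, ← pow_add]
    exact (integrableOn_pow_mul_exp_neg_mul hb (n + w)).const_mul r

lemma integral_eval_mul_pow_mul_exp_neg_mul {b : ℝ} (hb : 0 < b) (w : ℕ) (p : ℝ[X]) :
    ∫ x in Set.Ioi (0 : ℝ), p.eval x * x ^ w * Real.exp (-b * x) = gammaMoment w b p := by
  induction p using Polynomial.induction_on' with
  | add p q hp hq =>
    simp only [eval_add, add_mul, map_add]
    rw [integral_add (integrableOn_eval_mul_pow_mul_exp_neg_mul hb w p)
      (integrableOn_eval_mul_pow_mul_exp_neg_mul hb w q), hp, hq]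
  | monomial n r =>
    simp only [eval_monomial, mul_assoc, ← pow_add]
    rw [integral_const_mul, integral_pow_mul_exp_neg_mul hb, gammaMoment_monomial]

noncomputable def laguerreNormSq (β n : ℕ) : ℝ := (n + β)! / n !

lemma choose_mul_factorial_div_factorial {n k : ℕ} (β : ℕ) (hk : k ≤ n) :
    ((n + β).choose (n - k) : ℝ) * ((k + β)! / k !) = laguerreNormSq β n * n.choose k := by
  rw [laguerreNormSq, Nat.cast_choose ℝ (by omega : n - k ≤ n + β), Nat.cast_choose ℝ hk,
    show n + β - (n - k) = k + β by omega]
  field_simp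

lemma gammaMoment_laguerre (β n : ℕ) {b : ℝ} (hb : b ≠ 0) :
    gammaMoment β b (laguerre n β) = laguerreNormSq β n * (1 - b⁻¹) ^ n / b ^ (β + 1) := by
  rw [laguerre, map_sum, sub_eq_neg_add, add_pow, mul_sum, sum_div]
  refine sum_congr rfl fun k hk => ?_
  rw [gammaMoment_monomial, one_pow, mul_one]
  have h := choose_mul_factorial_div_factorial β (Nat.lt_succ_iff.mp (mem_range.mp hk))
  calc _ = ((n + β).choose (n - k) * ((k + β)! / k !) : ℝ) * ((-b⁻¹) ^ k / b ^ (β + 1)) := by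
        rw [neg_pow b⁻¹, inv_pow, pow_add, pow_add]
        field_simp
        ring
    _ = _ := by rw [h]; ring

lemma gammaMoment_add_laguerre (β j n : ℕ) :
    gammaMoment (β + j) 1 (laguerre n β) = (-1) ^ n * j.choose n * (β + j)! := by
  induction j generalizing β n with
  | zero =>
    rw [add_zero, gammaMoment_laguerre β n one_ne_zero]
    cases n <;> simp [laguerreNormSq]
  | succ j ih =>
    cases n with
    | zero => simp [gammaMoment_one]
    | succ n =>
      rw [laguerre_succ_eq_sub, map_sub, show β + (j + 1) = β + 1 + j by ring, ih, ih,
        Nat.choose_succ_succ']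
      push_cast
      ring

lemma gammaMoment_laguerre_mul_laguerre_of_lt (β : ℕ) {m n : ℕ} (h : m < n) :
    gammaMoment β 1 (laguerre m β * laguerre n β) = 0 := by
  nth_rewrite 1 [laguerre]
  rw [sum_mul, map_sum]
  refine sum_eq_zero fun i hi => ?_
  rw [gammaMoment_monomial_mul, gammaMoment_add_laguerre,
    Nat.choose_eq_zero_of_lt (show i < n by simp at hi; omega)]
  simp

lemma gammaMoment_laguerre_mul_self (β n : ℕ) :
    gammaMoment β 1 (laguerre n β * laguerre n β) = laguerreNormSq β n := by
  nth_rewrite 1 [laguerre]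
  rw [sum_mul, map_sum, sum_range_succ, sum_eq_zero fun i hi => ?_]
  · rw [gammaMoment_monomial_mul, gammaMoment_add_laguerre, laguerreNormSq]
    simp only [Nat.sub_self, Nat.choose_zero_right, Nat.choose_self, add_comm β]
    have h1 : ((-1 : ℝ) ^ n) * (-1) ^ n = 1 := by rw [← mul_pow]; norm_num
    linear_combination ((n + β)! / n ! : ℝ) * h1
  · rw [gammaMoment_monomial_mul, gammaMoment_add_laguerre,
      Nat.choose_eq_zero_of_lt (mem_range.mp hi)]
    simp

lemma gammaMoment_laguerre_mul_laguerre (β m n : ℕ) :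
    gammaMoment β 1 (laguerre m β * laguerre n β) = if m = n then laguerreNormSq β n else 0 := by
  rcases lt_trichotomy m n with h | rfl | h
  · rw [gammaMoment_laguerre_mul_laguerre_of_lt β h, if_neg h.ne]
  · rw [gammaMoment_laguerre_mul_self, if_pos rfl]
  · rw [mul_comm, gammaMoment_laguerre_mul_laguerre_of_lt β h, if_neg h.ne']

lemma gammaMoment_laguerre_mul_laguerre_succ (β m n : ℕ) :
    gammaMoment (β + 1) 1 (laguerre m β * laguerre n (β + 1)) =
      (if m = n then laguerreNormSq (β + 1) n else 0) -
        if m = n + 1 then laguerreNormSq (β + 1) n else 0 := by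
  cases m with
  | zero =>
    rw [laguerre_zero, ← laguerre_zero (β + 1), gammaMoment_laguerre_mul_laguerre]
    simp
  | succ m =>
    rw [laguerre_succ_eq_sub, sub_mul, map_sub, gammaMoment_laguerre_mul_laguerre,
      gammaMoment_laguerre_mul_laguerre]
    simp

lemma gammaMoment_derivative_laguerre_mul_of_ne (β : ℕ) {m n : ℕ} (h : m ≠ n) :
    gammaMoment (β + 1) 1 (derivative (laguerre m β) * laguerre n β) =
      -if m = n + 1 then laguerreNormSq (β + 1) n else 0 := by
  cases m with
  | zero => simp
  | succ m =>
    rw [derivative_laguerre_succ, neg_mul, map_neg, mul_comm,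
      gammaMoment_laguerre_mul_laguerre_succ, if_neg (Ne.symm h)]
    by_cases hnm : n = m
    · simp [hnm]
    · simp [hnm, Ne.symm hnm]

noncomputable def skewForm (w : ℕ) : ℝ[X] →ₗ[ℝ] ℝ[X] →ₗ[ℝ] ℝ :=
  LinearMap.mk₂ ℝ (fun p q => gammaMoment w 1 (p * derivative q - derivative p * q))
    (fun p p' q => by simp only [add_mul, map_sub, map_add]; ring)
    (fun c p q => by
      simp only [smul_mul_assoc, map_sub, map_smul, smul_eq_mul]; ring)
    (fun p q q' => by simp only [mul_add, map_sub, map_add]; ring)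
    (fun c p q => by
      simp only [mul_smul_comm, map_sub, map_smul, smul_eq_mul]; ring)

lemma skewForm_apply (w : ℕ) (p q : ℝ[X]) :
    skewForm w p q = gammaMoment w 1 (p * derivative q - derivative p * q) := rfl

lemma skewForm_laguerre (β m n : ℕ) :
    skewForm (β + 1) (laguerre m β) (laguerre n β) =
      (if m = n + 1 then laguerreNormSq (β + 1) n else 0) -
        if n = m + 1 then laguerreNormSq (β + 1) m else 0 := by
  by_cases h : m = n
  · subst h
    simp [skewForm_apply, mul_comm]
  · rw [skewForm_apply, map_sub, mul_comm,
      gammaMoment_derivative_laguerre_mul_of_ne β (Ne.symm h),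
      gammaMoment_derivative_laguerre_mul_of_ne β h]
    ring

noncomputable def evenCoeff (A k : ℕ) : ℝ := ∏ i ∈ Icc 1 k, (2 * i - 1) / (2 * i + A)

lemma evenCoeff_succ_mul_laguerreNormSq (A k : ℕ) :
    evenCoeff A (k + 1) * laguerreNormSq (A + 1) (2 * k + 1) =
      evenCoeff A k * laguerreNormSq (A + 1) (2 * k) := by
  rw [evenCoeff, evenCoeff, prod_Icc_succ_top (by omega), laguerreNormSq, laguerreNormSq,
    show 2 * k + 1 + (A + 1) = 2 * k + (A + 1) + 1 by ring, Nat.factorial_succ (2 * k + (A + 1)),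
    Nat.factorial_succ (2 * k)]
  push_cast
  field_simp
  ring

lemma skewForm_evenSum_laguerreSum (A N : ℕ) (g : ℕ → ℝ) :
    skewForm (A + 1) (∑ k ∈ range (N + 1), evenCoeff A k • laguerre (2 * k) A)
      (∑ j ∈ range (2 * N + 1), g j • laguerre j A) = 0 := by
  simp only [map_sum, map_smul, LinearMap.sum_apply, LinearMap.smul_apply,
    smul_eq_mul, skewForm_laguerre]
  refine sum_eq_zero fun j hj => ?_
  obtain ⟨i, rfl | rfl⟩ := Nat.even_or_odd' j
  · refine mul_eq_zero_of_right _ (sum_eq_zero fun k _ => ?_)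
    rw [if_neg (by omega), if_neg (by omega), sub_zero, mul_zero]
  · have h₁ : ∀ k, 2 * k = 2 * i + 1 + 1 ↔ k = i + 1 := by omega
    have h₂ : ∀ k, 2 * i + 1 = 2 * k + 1 ↔ k = i := by omega
    simp only [h₁, h₂, mul_sub, mul_ite, mul_zero, sum_sub_distrib, sum_ite_eq', mem_range]
    rw [mem_range] at hj
    rw [if_pos (by omega), if_pos (by omega), evenCoeff_succ_mul_laguerreNormSq, sub_self]

lemma gammaMoment_laguerre_inv_one_add (β n : ℕ) {a : ℝ} (ha : 1 + a ≠ 0) :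
    gammaMoment β (1 + a)⁻¹ (laguerre n β) =
      laguerreNormSq β n * (-a) ^ n * (1 + a) ^ (β + 1) := by
  rw [gammaMoment_laguerre β n (inv_ne_zero ha), inv_inv, inv_pow, div_inv_eq_mul]
  ring

lemma gammaMoment_smul_laguerre_zero_sub_derivative (β : ℕ) {a : ℝ} (ha : 1 + a ≠ 0) :
    gammaMoment (β + 1) (1 + a)⁻¹ ((a / (1 + a)) • laguerre 0 β - derivative (laguerre 0 β)) =
      (1 + a) ^ (β + 1) * (a * laguerreNormSq (β + 1) 0) := by
  rw [laguerre_zero, derivative_one, sub_zero, map_smul, ← laguerre_zero (β + 1),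
    gammaMoment_laguerre_inv_one_add _ _ ha, smul_eq_mul]
  field_simp
  ring

lemma gammaMoment_smul_laguerre_succ_sub_derivative (β n : ℕ) {a : ℝ} (ha : 1 + a ≠ 0) :
    gammaMoment (β + 1) (1 + a)⁻¹
        ((a / (1 + a)) • laguerre (n + 1) β - derivative (laguerre (n + 1) β)) =
      (1 + a) ^ (β + 1) *
        ((-a) ^ n * laguerreNormSq (β + 1) n - (-a) ^ (n + 2) * laguerreNormSq (β + 1) (n + 1)) := by
  rw [derivative_laguerre_succ, laguerre_succ_eq_sub, sub_neg_eq_add, map_add, map_smul, map_sub,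
    gammaMoment_laguerre_inv_one_add _ _ ha, gammaMoment_laguerre_inv_one_add _ _ ha, smul_eq_mul]
  field_simp
  ring

lemma gammaMoment_smul_evenSum_sub_derivative (A N : ℕ) {a : ℝ} (ha : 1 + a ≠ 0) :
    gammaMoment (A + 1) (1 + a)⁻¹
        ((a / (1 + a)) • ∑ k ∈ range (N + 1), evenCoeff A k • laguerre (2 * k) A -
          derivative (∑ k ∈ range (N + 1), evenCoeff A k • laguerre (2 * k) A)) =
      (1 + a) ^ (A + 1) * a ^ (2 * N + 1) * (evenCoeff A N * laguerreNormSq (A + 1) (2 * N)) := by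
  simp only [smul_sum, map_sum, ← sum_sub_distrib, map_smul, smul_comm (a / (1 + a)), ← smul_sub,
    smul_eq_mul]
  induction N with
  | zero =>
    rw [sum_range_one, gammaMoment_smul_laguerre_zero_sub_derivative A ha]
    ring
  | succ N ih =>
    rw [sum_range_succ, ih, show 2 * (N + 1) = 2 * N + 1 + 1 by ring,
      gammaMoment_smul_laguerre_succ_sub_derivative A _ ha,
      Odd.neg_pow ⟨N, rfl⟩, Odd.neg_pow ⟨N + 1, by ring⟩,
      ← evenCoeff_succ_mul_laguerreNormSq]
    ring

lemma skewInner_comp_mul_left (M N : ℕ) (hM : 0 < M) (f g : ℝ → ℝ) :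
    skewInner M N (fun x => f (2 * M * x)) (fun x => g (2 * M * x)) =
      ((2 * M : ℝ) ^ (2 * (M - N) + 1))⁻¹ *
        ∫ y in Set.Ioi 0,
          (f y * deriv g y - deriv f y * g y) * y ^ (2 * (M - N) + 1) * Real.exp (-y) := by
  rw [skewInner]
  set w := 2 * (M - N) + 1
  have hs : (0 : ℝ) < 2 * M := by positivity
  set H := fun y => (f y * deriv g y - deriv f y * g y) * y ^ w * Real.exp (-y)
  calc _ = ∫ x in Set.Ioi 0, (2 * M) * ((2 * M : ℝ) ^ w)⁻¹ * H (2 * M * x) := by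
        refine setIntegral_congr_fun measurableSet_Ioi fun x _ => ?_
        simp only [H, deriv_comp_mul_left, smul_eq_mul, mul_pow, neg_mul]
        field_simp
    _ = _ := by
        rw [integral_const_mul, integral_comp_mul_left_Ioi H 0 hs, mul_zero, smul_eq_mul]
        field_simp

lemma integral_skew_exp_sub_eval (w : ℕ) (F Q : ℝ[X]) {c : ℝ} (hc : c < 1) :
    ∫ y in Set.Ioi 0,
        (F.eval y * deriv (fun y => Real.exp (c * y) - Q.eval y) y -
          deriv (fun y => F.eval y) y * (Real.exp (c * y) - Q.eval y)) * y ^ w * Real.exp (-y) =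
      gammaMoment w (1 - c) (c • F - derivative F) - skewForm w F Q := by
  have hderiv : ∀ y, deriv (fun y => Real.exp (c * y) - Q.eval y) y =
      c * Real.exp (c * y) - Q.derivative.eval y := fun y => by
    have := ((hasDerivAt_id y).const_mul c).exp.sub (Q.hasDerivAt y)
    exact this.deriv.trans (by simp; ring)
  have hc' : 0 < 1 - c := by linarith
  rw [skewForm_apply, ← integral_eval_mul_pow_mul_exp_neg_mul hc',
    ← integral_eval_mul_pow_mul_exp_neg_mul one_pos,
    ← integral_sub (integrableOn_eval_mul_pow_mul_exp_neg_mul hc' w _)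
      (integrableOn_eval_mul_pow_mul_exp_neg_mul one_pos w _)]
  refine setIntegral_congr_fun measurableSet_Ioi fun y _ => ?_
  rw [hderiv, Polynomial.deriv, show -(1 - c) * y = c * y + -y by ring, Real.exp_add,
    neg_one_mul]
  simp only [eval_sub, eval_smul, eval_mul, smul_eq_mul]
  ring

/-- The normalization constant `r_{N-1} = ⟨φ_{2N-2}, φ_{2N-1}⟩₄` of the skew-orthogonal
family in the rank-one quaternionic spiked Wishart model. -/
theorem stmt_17 (M N : ℕ) (hN : 1 ≤ N) (hMN : N ≤ M) (a : ℝ) (ha : -1 < a) :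
    skewInner M N
      (fun x => ∑ k ∈ Finset.range N,
        (∏ i ∈ Finset.Icc 1 k,
            (2 * (i : ℝ) - 1) / (2 * (i : ℝ) + 2 * ((M : ℝ) - (N : ℝ)))) *
          genLaguerre (2 * k) (2 * (M - N)) (2 * (M : ℝ) * x))
      (fun x =>
        Real.exp (a / (1 + a) * (2 * (M : ℝ) * x)) -
          (1 + a) ^ (2 * (M - N) + 1) *
            ∑ j ∈ Finset.range (2 * N - 1),
              (-a) ^ j * genLaguerre j (2 * (M - N)) (2 * (M : ℝ) * x))
      = ((1 + a) / (2 * (M : ℝ))) ^ (2 * (M - N) + 1) * a ^ (2 * N - 1) *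
          (((2 * M - 1).factorial : ℝ) / ((2 * N - 2).factorial : ℝ)) *
          ∏ k ∈ Finset.Icc 1 (N - 1),
            (2 * (k : ℝ) - 1) / (2 * (k : ℝ) + 2 * ((M : ℝ) - (N : ℝ))) := by
  obtain ⟨n, rfl⟩ : ∃ n, N = n + 1 := ⟨N - 1, by omega⟩
  set A := 2 * (M - (n + 1))
  have hγ : ∀ k, evenCoeff A k = ∏ i ∈ Icc 1 k,
      (2 * (i : ℝ) - 1) / (2 * (i : ℝ) + 2 * ((M : ℝ) - ((n + 1 : ℕ) : ℝ))) := fun k => by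
    simp only [evenCoeff, A, Nat.cast_mul, Nat.cast_ofNat, Nat.cast_sub hMN]
  set F := ∑ k ∈ range (n + 1), evenCoeff A k • laguerre (2 * k) A
  set Q := ∑ j ∈ range (2 * n + 1), (-a) ^ j • laguerre j A
  have hf : ∀ x, F.eval x = ∑ k ∈ range (n + 1), (∏ i ∈ Icc 1 k,
      (2 * (i : ℝ) - 1) / (2 * (i : ℝ) + 2 * ((M : ℝ) - ((n + 1 : ℕ) : ℝ)))) *
        genLaguerre (2 * k) A x := fun x => by
    simp only [F, eval_finsetSum, eval_smul, eval_laguerre, smul_eq_mul, hγ]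
  have hg : ∀ x, ((1 + a) ^ (A + 1) • Q).eval x = (1 + a) ^ (A + 1) *
      ∑ j ∈ range (2 * (n + 1) - 1), (-a) ^ j * genLaguerre j A x := fun x => by
    simp only [Q, eval_smul, eval_finsetSum, eval_laguerre, smul_eq_mul,
      show 2 * (n + 1) - 1 = 2 * n + 1 by omega]
  have h1a : 0 < 1 + a := by linarith
  have hc : a / (1 + a) < 1 := by rw [div_lt_one h1a]; linarith
  simp only [← hf, ← hg]
  rw [skewInner_comp_mul_left M (n + 1) (by omega) (fun y => F.eval y)
      (fun y => Real.exp (a / (1 + a) * y) - ((1 + a) ^ (A + 1) • Q).eval y),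
    integral_skew_exp_sub_eval _ _ _ hc, show 1 - a / (1 + a) = (1 + a)⁻¹ by field_simp; ring,
    gammaMoment_smul_evenSum_sub_derivative A n h1a.ne', map_smul,
    skewForm_evenSum_laguerreSum, smul_zero, sub_zero, ← hγ, laguerreNormSq,
    show 2 * n + (A + 1) = 2 * M - 1 by omega, show 2 * (n + 1) - 2 = 2 * n by omega,
    show 2 * (n + 1) - 1 = 2 * n + 1 by omega, Nat.add_sub_cancel, div_pow]
  field_simp
  rfl
end
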